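/- Let K ⊂ ℝⁿ be a strictly convex, smooth, compact set with 0 in its interior such that ℓ₁(r) ⊆ K ⊆ ℓ∞(R) for some r, R > 0. Let x ∈ K with ‖x‖_K < 1, c ∈ K°, η > 0, ξ ∈ {0,1}, and let a ∈ K equal x/‖x‖_K if ξ = 1 and equal ε·r·e_i for some ε ∈ {−1,1} and coordinate i ∈ {1,…,n} if ξ = 0. Define c̃ = (n/r²)(1 − ξ)(⟨a, c⟩/(1 − ‖x‖_K))·a, u = ∇F_K(x) − η c̃, and v = ∇F_K(x), where F_K(x) = −ln(1 − ‖x‖_K) − ‖x‖_K. Then (‖u‖_{K°} − ‖v‖_{K°})/(1 + ‖v‖_{K°}) ≥ −η n R/r. -/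

import Mathlib

open scoped InnerProductSpace
open scoped Pointwise
open MeasureTheory

noncomputable section

abbrev Euc (n : ℕ) := EuclideanSpace ℝ (Fin n)

/-- The polar set `K° = {d | ⟪d, x⟫ ≤ 1 for all x ∈ K}`. -/
def polarSet {n : ℕ} (K : Set (Euc n)) : Set (Euc n) := {d | ∀ x ∈ K, ⟪d, x⟫_ℝ ≤ 1}

/-- The normal cone of `K` at `y`. -/
def normalCone {n : ℕ} (K : Set (Euc n)) (y : Euc n) : Set (Euc n) :=
  {d | ∀ x ∈ K, 0 ≤ ⟪d, y - x⟫_ℝ}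

/-- A set is smooth if at each boundary point there is exactly one normal direction in `∂K°`. -/
def SmoothSet {n : ℕ} (K : Set (Euc n)) : Prop :=
  ∀ x ∈ frontier K, ∃! d, d ∈ normalCone K x ∩ frontier (polarSet K)

/-- A set is strictly convex if the midpoint of two distinct boundary points is interior. -/
def StrictlyConvexSet {n : ℕ} (K : Set (Euc n)) : Prop :=
  ∀ x₁ ∈ frontier K, ∀ x₂ ∈ frontier K, x₁ ≠ x₂ → midpoint ℝ x₁ x₂ ∈ interior K

/-- `(α, q)`-uniform convexity of a set w.r.t. its gauge. -/
def UniformlyConvexSet {n : ℕ} (K : Set (Euc n)) (α q : ℝ) : Prop :=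
  ∀ x ∈ K, ∀ y ∈ K, ∀ z ∈ K, ∀ γ ∈ Set.Icc (0:ℝ) 1,
    γ • x + (1 - γ) • y + (α / q * (γ * (1 - γ)) * gauge K (x - y) ^ q) • z ∈ K

/-- The barrier function `F_K(x) = -ln(1 - ‖x‖_K) - ‖x‖_K`. -/
def FK {n : ℕ} (K : Set (Euc n)) (x : Euc n) : ℝ := -Real.log (1 - gauge K x) - gauge K x

/-- Fenchel conjugate of the barrier `F_K` (defined on `D_K = {‖x‖_K < 1}`). -/
def FstarK {n : ℕ} (K : Set (Euc n)) (d : Euc n) : ℝ :=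
  sSup ((fun x => ⟪x, d⟫_ℝ - FK K x) '' {x | gauge K x < 1})

/-- Bregman divergence `D_F(u, v) = F(u) - F(v) - ⟪∇F(v), u - v⟫`. -/
def breg {n : ℕ} (F : Euc n → ℝ) (u v : Euc n) : ℝ :=
  F u - F v - ⟪gradient F v, u - v⟫_ℝ

def l1Ball {n : ℕ} (r : ℝ) : Set (Euc n) := {x | ∑ i, |x i| ≤ r}
def linfBall {n : ℕ} (R : ℝ) : Set (Euc n) := {x | ∀ i, |x i| ≤ R}
def l2Ball {n : ℕ} (r : ℝ) : Set (Euc n) := Metric.closedBall 0 r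
def lqBall {n : ℕ} (q r : ℝ) : Set (Euc n) := {x | ∑ i, |x i| ^ q ≤ r ^ q}

/-!
For `ξ = 1` the perturbation vanishes. Otherwise `c̃` is a multiple of `a = ±r eᵢ`, whose dual
gauge is at most `r R` by Hölder's inequality, and `|⟪a, c⟫| ≤ 1`, so `‖c̃‖_{K°} ≤ n R / (r (1 - ‖x‖_K))`.
The loss of the factor `1 - ‖x‖_K` is compensated by the denominator: differentiating
`t ↦ F_K(t x)` at `t = 1` gives `⟪∇F_K(x), x⟫ = ‖x‖_K² / (1 - ‖x‖_K)`, and testing `∇F_K(x)` against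
`x / ‖x‖_K ∈ K` yields `1 + ‖∇F_K(x)‖_{K°} ≥ 1 / (1 - ‖x‖_K)`. The triangle inequality for the
dual gauge finishes the proof.
-/

open Topology

section

variable {n : ℕ}

section Polar

variable {K : Set (Euc n)}

theorem convex_polarSet (K : Set (Euc n)) : Convex ℝ (polarSet K) := by
  intro d₁ h₁ d₂ h₂ s t hs ht hst y hy
  simp only [inner_add_left, real_inner_smul_left]
  nlinarith [h₁ y hy, h₂ y hy]

theorem polarSet_mem_nhds_zero (hK : Bornology.IsBounded K) : polarSet K ∈ 𝓝 (0 : Euc n) := by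
  obtain ⟨M, hM, hKM⟩ := hK.exists_pos_norm_le
  refine Filter.mem_of_superset (Metric.ball_mem_nhds 0 (inv_pos.2 hM)) fun d hd y hy => ?_
  rw [mem_ball_zero_iff] at hd
  calc ⟪d, y⟫_ℝ ≤ ‖d‖ * ‖y‖ := real_inner_le_norm d y
    _ ≤ M⁻¹ * M := mul_le_mul hd.le (hKM y hy) (norm_nonneg y) (inv_pos.2 hM).le
    _ = 1 := inv_mul_cancel₀ hM.ne'

theorem gauge_polarSet_add_le (hK : Bornology.IsBounded K) (u w : Euc n) :
    gauge (polarSet K) (u + w) ≤ gauge (polarSet K) u + gauge (polarSet K) w :=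
  gauge_add_le (convex_polarSet K) (absorbent_nhds_zero (polarSet_mem_nhds_zero hK)) u w

theorem inner_le_gauge_polarSet (hK : Bornology.IsBounded K) {y : Euc n} (hy : y ∈ K)
    (w : Euc n) : ⟪w, y⟫_ℝ ≤ gauge (polarSet K) w := by
  refine le_csInf (absorbent_nhds_zero (polarSet_mem_nhds_zero hK)).gauge_set_nonempty ?_
  rintro b ⟨hb, d, hd, rfl⟩
  rw [real_inner_smul_left]
  nlinarith [hd y hy]

theorem gauge_polarSet_le_of_forall_inner_le {w : Euc n} {M : ℝ} (hM : 0 ≤ M)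
    (h : ∀ y ∈ K, ⟪w, y⟫_ℝ ≤ M) : gauge (polarSet K) w ≤ M := by
  refine le_of_forall_pos_le_add fun δ hδ => gauge_le_of_mem (by positivity) ?_
  rw [Set.mem_smul_set_iff_inv_smul_mem₀ (by positivity)]
  intro y hy
  rw [real_inner_smul_left, inv_mul_le_one₀ (by positivity)]
  linarith [h y hy]

theorem abs_inner_le_one_of_mem_polarSet {a c : Euc n} (hc : c ∈ polarSet K) (ha : a ∈ K)
    (hna : -a ∈ K) : |⟪a, c⟫_ℝ| ≤ 1 := by
  have h₁ := hc a ha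
  have h₂ := hc (-a) hna
  rw [inner_neg_right] at h₂
  rw [real_inner_comm, abs_le]
  constructor <;> linarith

end Polar

section Balls

theorem l1Ball_nonneg {r : ℝ} {w : Euc n} (hw : w ∈ l1Ball r) : 0 ≤ r :=
  (Finset.sum_nonneg fun i _ => abs_nonneg (w i)).trans hw

theorem neg_mem_l1Ball {r : ℝ} {w : Euc n} (hw : w ∈ l1Ball r) : -w ∈ l1Ball r := by
  simpa [l1Ball, abs_neg] using hw

theorem smul_mem_l1Ball {r : ℝ} {w : Euc n} (hw : w ∈ l1Ball r) (t : ℝ) :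
    t • w ∈ l1Ball (|t| * r) := by
  simp only [l1Ball, Set.mem_ofPred_eq, PiLp.smul_apply, smul_eq_mul, abs_mul,
    ← Finset.mul_sum] at hw ⊢
  exact mul_le_mul_of_nonneg_left hw (abs_nonneg t)

theorem single_mem_l1Ball (i : Fin n) (s : ℝ) : EuclideanSpace.single i s ∈ l1Ball |s| := by
  simp [l1Ball, PiLp.single_apply, apply_ite abs]

theorem inner_le_of_mem_l1Ball_of_mem_linfBall {r R : ℝ} (hR : 0 ≤ R) {w y : Euc n}
    (hw : w ∈ l1Ball r) (hy : y ∈ linfBall R) : ⟪w, y⟫_ℝ ≤ r * R := by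
  calc ⟪w, y⟫_ℝ = ∑ j, w j * y j := by simp [PiLp.inner_apply, mul_comm]
    _ ≤ ∑ j, |w j| * R := Finset.sum_le_sum fun j _ =>
        calc w j * y j ≤ |w j| * |y j| := abs_mul (w j) (y j) ▸ le_abs_self _
          _ ≤ |w j| * R := mul_le_mul_of_nonneg_left (hy j) (abs_nonneg _)
    _ = (∑ j, |w j|) * R := (Finset.sum_mul ..).symm
    _ ≤ r * R := mul_le_mul_of_nonneg_right hw hR

theorem gauge_polarSet_le_of_mem_l1Ball {K : Set (Euc n)} {r R : ℝ} (hR : 0 ≤ R)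
    (hlinf : K ⊆ linfBall R) {w : Euc n} (hw : w ∈ l1Ball r) : gauge (polarSet K) w ≤ r * R :=
  gauge_polarSet_le_of_forall_inner_le (mul_nonneg (l1Ball_nonneg hw) hR) fun _ hy =>
    inner_le_of_mem_l1Ball_of_mem_linfBall hR hw (hlinf hy)

theorem gauge_polarSet_mul_inner_smul_le {K : Set (Euc n)} {r R : ℝ} (hR : 0 ≤ R)
    (hl1 : l1Ball r ⊆ K) (hlinf : K ⊆ linfBall R) {a c : Euc n} (hc : c ∈ polarSet K)
    (ha : a ∈ l1Ball r) (t : ℝ) : gauge (polarSet K) ((t * ⟪a, c⟫_ℝ) • a) ≤ |t| * r * R := by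
  have hac : |⟪a, c⟫_ℝ| ≤ 1 :=
    abs_inner_le_one_of_mem_polarSet hc (hl1 ha) (hl1 (neg_mem_l1Ball ha))
  calc gauge (polarSet K) ((t * ⟪a, c⟫_ℝ) • a) ≤ |t * ⟪a, c⟫_ℝ| * r * R :=
        gauge_polarSet_le_of_mem_l1Ball hR hlinf (smul_mem_l1Ball ha _)
    _ ≤ |t| * r * R := by
        rw [abs_mul, mul_assoc, mul_assoc, mul_assoc]
        exact mul_le_mul_of_nonneg_left
          (mul_le_of_le_one_left (mul_nonneg (l1Ball_nonneg ha) hR) hac) (abs_nonneg t)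

end Balls

section Barrier

variable {K : Set (Euc n)} {x : Euc n}

theorem FK_smul (K : Set (Euc n)) (x : Euc n) {t : ℝ} (ht : 0 ≤ t) :
    FK K (t • x) = -Real.log (1 - t * gauge K x) - t * gauge K x := by
  rw [FK, gauge_smul_of_nonneg ht, smul_eq_mul]

theorem hasDerivAt_neg_log_one_sub_mul_sub_mul {g : ℝ} (hg : g ≠ 1) :
    HasDerivAt (fun t => -Real.log (1 - t * g) - t * g) (g ^ 2 / (1 - g)) 1 := by
  have hg' : 1 - g ≠ 0 := sub_ne_zero.2 hg.symm
  have hlin : HasDerivAt (fun t : ℝ => 1 - t * g) (-g) 1 := by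
    simpa using ((hasDerivAt_id (1 : ℝ)).mul_const g).const_sub 1
  refine ((hlin.log (by simpa using hg')).neg.sub
    ((hasDerivAt_id (1 : ℝ)).mul_const g)).congr_deriv ?_
  field_simp
  ring

theorem inner_gradient_FK_self (hd : DifferentiableAt ℝ (FK K) x) (hx : gauge K x < 1) :
    ⟪gradient (FK K) x, x⟫_ℝ = gauge K x ^ 2 / (1 - gauge K x) := by
  have hline : HasDerivAt (fun t : ℝ => FK K (t • x)) (fderiv ℝ (FK K) x x) 1 := by
    have hF : HasFDerivAt (FK K) (fderiv ℝ (FK K) x) ((1 : ℝ) • x) := by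
      simpa using hd.hasFDerivAt
    have h := hF.comp_hasDerivAt (1 : ℝ) ((hasDerivAt_id (1 : ℝ)).smul_const x)
    rw [one_smul] at h
    exact h
  have hexplicit : HasDerivAt (fun t : ℝ => FK K (t • x))
      (gauge K x ^ 2 / (1 - gauge K x)) 1 :=
    (hasDerivAt_neg_log_one_sub_mul_sub_mul hx.ne).congr_of_eventuallyEq <|
      Filter.mem_of_superset (Ioi_mem_nhds one_pos) fun t ht => FK_smul K x (le_of_lt ht)
  rw [inner_gradient_left]
  exact hline.unique hexplicit

theorem div_one_sub_gauge_le_gauge_polarSet_gradient_FK (hKcl : IsClosed K)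
    (hKbdd : Bornology.IsBounded K) (hKconv : Convex ℝ K) (h0 : K ∈ 𝓝 0)
    (hd : DifferentiableAt ℝ (FK K) x) (hx : gauge K x < 1) :
    gauge K x / (1 - gauge K x) ≤ gauge (polarSet K) (gradient (FK K) x) := by
  rcases (gauge_nonneg x : 0 ≤ gauge K x).eq_or_lt with hg0 | hgpos
  · rw [← hg0, zero_div]
    exact gauge_nonneg _
  have hxK : (gauge K x)⁻¹ • x ∈ K := by
    have h := (gauge_le_one_iff_mem_closure hKconv h0).1 <| by
      rw [gauge_smul_of_nonneg (inv_nonneg.2 hgpos.le), smul_eq_mul, inv_mul_cancel₀ hgpos.ne']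
    rwa [hKcl.closure_eq] at h
  calc gauge K x / (1 - gauge K x) = ⟪gradient (FK K) x, (gauge K x)⁻¹ • x⟫_ℝ := by
        rw [real_inner_smul_right, inner_gradient_FK_self hd hx]
        field_simp
    _ ≤ gauge (polarSet K) (gradient (FK K) x) := inner_le_gauge_polarSet hKbdd hxK _

end Barrier

theorem gauge_polarSet_le_sub_smul_add {K : Set (Euc n)} (hK : Bornology.IsBounded K) {η : ℝ}
    (hη : 0 ≤ η) (w z : Euc n) :
    gauge (polarSet K) w ≤ gauge (polarSet K) (w - η • z) + η * gauge (polarSet K) z := by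
  calc gauge (polarSet K) w = gauge (polarSet K) (w - η • z + η • z) := by rw [sub_add_cancel]
    _ ≤ gauge (polarSet K) (w - η • z) + gauge (polarSet K) (η • z) :=
        gauge_polarSet_add_le hK _ _
    _ = gauge (polarSet K) (w - η • z) + η * gauge (polarSet K) z := by
        rw [gauge_smul_of_nonneg hη, smul_eq_mul]

end

theorem neg_mul_le_sub_div_one_add {p q w g C η : ℝ} (hη : 0 ≤ η) (hC : 0 ≤ C) (hg : g < 1)
    (hq : q ≤ p + η * w) (hw : w ≤ C / (1 - g)) (hgq : g / (1 - g) ≤ q) :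
    -(η * C) ≤ (p - q) / (1 + q) := by
  have h1g : 0 < 1 - g := sub_pos.2 hg
  have hden : 1 / (1 - g) ≤ 1 + q := by
    have : 1 / (1 - g) = 1 + g / (1 - g) := by field_simp; ring
    linarith
  have hw' : η * w ≤ η * C * (1 + q) :=
    calc η * w ≤ η * (C / (1 - g)) := mul_le_mul_of_nonneg_left hw hη
      _ = η * C * (1 / (1 - g)) := by ring
      _ ≤ η * C * (1 + q) := mul_le_mul_of_nonneg_left hden (mul_nonneg hη hC)
  rw [le_div_iff₀ ((one_div_pos.2 h1g).trans_le hden)]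
  linarith

theorem theta_lower_bound_general {n : ℕ}
    (K : Set (Euc n)) (hKcomp : IsCompact K) (hKconv : Convex ℝ K)
    (h0 : (0 : Euc n) ∈ interior K)
    (r R : ℝ) (hr : 0 < r) (hR : 0 < R)
    (hl1 : l1Ball r ⊆ K) (hlinf : K ⊆ linfBall R)
    (x : Euc n) (hx1 : gauge K x < 1)
    (c : Euc n) (hc : c ∈ polarSet K)
    (η : ℝ) (hη : 0 < η)
    (ξ ε : Bool) (i : Fin n)
    (a : Euc n)
    (ha : a = if ξ then (gauge K x)⁻¹ • x
              else if ε then EuclideanSpace.single i r else EuclideanSpace.single i (-r))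
    (ctilde u v : Euc n)
    (hct : ctilde = (((n : ℝ) / r ^ 2) * (if ξ then 0 else 1)
                      * (⟪a, c⟫_ℝ / (1 - gauge K x))) • a)
    (hu : u = gradient (FK K) x - η • ctilde)
    (hv : v = gradient (FK K) x) :
    (gauge (polarSet K) u - gauge (polarSet K) v) / (1 + gauge (polarSet K) v)
      ≥ -(η * n * R / r) := by
  set g := gauge K x
  have hbound : 0 ≤ η * n * R / r := by positivity
  by_cases hd : DifferentiableAt ℝ (FK K) x
  swap
  · rw [hv, gradient_eq_zero_of_not_differentiableAt hd, gauge_zero, sub_zero, add_zero, div_one]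
    exact (neg_nonpos.2 hbound).trans (gauge_nonneg u)
  cases ξ
  case true =>
    rw [show u = v by simp [hu, hv, hct], sub_self, zero_div]
    exact neg_nonpos.2 hbound
  have haL1 : a ∈ l1Ball r := by
    cases ε
    · simpa [ha, abs_of_pos hr] using single_mem_l1Ball i (-r)
    · simpa [ha, abs_of_pos hr] using single_mem_l1Ball i r
  have h1g : 0 < 1 - g := sub_pos.2 hx1
  have hGct : gauge (polarSet K) ctilde ≤ n * R / r / (1 - g) := by
    have hct' : ctilde = ((n / r ^ 2 / (1 - g)) * ⟪a, c⟫_ℝ) • a := by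
      rw [hct]
      congr 1
      simp only [Bool.false_eq_true, if_false]
      ring
    calc gauge (polarSet K) ctilde ≤ |n / r ^ 2 / (1 - g)| * r * R :=
          hct' ▸ gauge_polarSet_mul_inner_smul_le hR.le hl1 hlinf hc haL1 _
      _ = n * R / r / (1 - g) := by rw [abs_of_nonneg (by positivity)]; field_simp
  have htri : gauge (polarSet K) v ≤ gauge (polarSet K) u + η * gauge (polarSet K) ctilde := by
    rw [hu, ← hv]
    exact gauge_polarSet_le_sub_smul_add hKcomp.isBounded hη.le v ctilde
  have hgrad : g / (1 - g) ≤ gauge (polarSet K) v := hv ▸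
    div_one_sub_gauge_le_gauge_polarSet_gradient_FK hKcomp.isClosed hKcomp.isBounded hKconv
      (mem_interior_iff_mem_nhds.1 h0) hd hx1
  calc -(η * n * R / r) = -(η * (n * R / r)) := by ring
    _ ≤ _ := neg_mul_le_sub_div_one_add hη.le (by positivity) hx1 htri hGct hgrad

/-- Lower bound on `Θ = (‖u‖_{K°} - ‖v‖_{K°}) / (1 + ‖v‖_{K°})` for the
bandit loss estimate, where `u = ∇F_K(x) - η c̃` and `v = ∇F_K(x)`. -/
theorem theta_lower_bound {n : ℕ}
    (K : Set (Euc n)) (hKcomp : IsCompact K) (hKconv : Convex ℝ K)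
    (h0 : (0 : Euc n) ∈ interior K)
    (hstrict : StrictlyConvexSet K) (hsmooth : SmoothSet K)
    (r R : ℝ) (hr : 0 < r) (hR : 0 < R)
    (hl1 : l1Ball r ⊆ K) (hlinf : K ⊆ linfBall R)
    (x : Euc n) (hxK : x ∈ K) (hx1 : gauge K x < 1)
    (c : Euc n) (hc : c ∈ polarSet K)
    (η : ℝ) (hη : 0 < η)
    (ξ ε : Bool) (i : Fin n)
    (a : Euc n)
    (ha : a = if ξ then (gauge K x)⁻¹ • x
              else if ε then EuclideanSpace.single i r else EuclideanSpace.single i (-r))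
    (ctilde u v : Euc n)
    (hct : ctilde = (((n : ℝ) / r ^ 2) * (if ξ then 0 else 1)
                      * (⟪a, c⟫_ℝ / (1 - gauge K x))) • a)
    (hu : u = gradient (FK K) x - η • ctilde)
    (hv : v = gradient (FK K) x) :
    (gauge (polarSet K) u - gauge (polarSet K) v) / (1 + gauge (polarSet K) v)
      ≥ -(η * n * R / r) :=
  theta_lower_bound_general K hKcomp hKconv h0 r R hr hR hl1 hlinf x hx1 c hc η hη ξ ε i a ha ctilde
    u v hct hu hv
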